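/- arXiv:1012.5613 — 2 statements merged into one kernel-verified Lean document; each statement's English description precedes it below -/
import Mathlib

section
/- Let p be a prime and let x be a solution of ẍ + V'_x(t,x) = 0 with x(t + p k₂ T₀) = x(t) + p k₁ for all t, but such that x is not k₂T₀-periodic modulo ℤ (i.e. there is no integer m with x(t + k₂T₀) = x(t) + m for all t; x is non-fundamental). Then the p functions x(t), x(t + k₂T₀), x(t + 2k₂T₀), …, x(t + (p-1)k₂T₀) are pairwise distinct solutions. -/
/-! The time shift by `k₂ T₀` is a symmetry of the equation, so all the shifts are solutions.
For the distinctness, the integers `n` for which `x(· + n k₂ T₀)` differs from `x` by an integer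
constant form a subgroup of `ℤ`. It contains `p`, by the winding condition, and would contain
`i - j` if the `i`-th and `j`-th shifts agreed modulo `ℤ`. As `0 < |i - j| < p` and `p` is prime,
it would then contain `1`, i.e. `x` would be fundamental. -/

theorem deriv_deriv_comp_add_const (f : ℝ → ℝ) (c t : ℝ) :
    deriv (deriv fun s => f (s + c)) t = deriv (deriv f) (t + c) := by
  have hderiv : deriv (fun s => f (s + c)) = fun s => deriv f (s + c) :=
    funext (deriv_comp_add_const f c)
  rw [hderiv, deriv_comp_add_const]

theorem solution_comp_add_period {V : ℝ → ℝ → ℝ} {c : ℝ} (hV : Function.Periodic V c)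
    {x : ℝ → ℝ} (hsol : ∀ t, deriv (deriv x) t + deriv (V t) (x t) = 0) (t : ℝ) :
    deriv (deriv fun s => x (s + c)) t + deriv (V t) (x (t + c)) = 0 := by
  rw [deriv_deriv_comp_add_const, ← hV t]
  exact hsol (t + c)

def periodsModInt (x : ℝ → ℝ) (c : ℝ) : AddSubgroup ℤ where
  carrier := {n | ∃ m : ℤ, ∀ t, x (t + n * c) = x t + m}
  zero_mem' := ⟨0, by simp⟩
  add_mem' := by
    rintro a b ⟨m, hm⟩ ⟨m', hm'⟩
    refine ⟨m + m', fun t => ?_⟩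
    have hsplit : t + ((a + b : ℤ) : ℝ) * c = t + a * c + b * c := by push_cast; ring
    rw [hsplit, hm', hm]
    push_cast
    ring
  neg_mem' := by
    rintro a ⟨m, hm⟩
    refine ⟨-m, fun t => ?_⟩
    have hback := hm (t + ((-a : ℤ) : ℝ) * c)
    rw [Int.cast_neg, neg_mul, neg_add_cancel_right] at hback
    rw [Int.cast_neg, Int.cast_neg, neg_mul]
    linarith

theorem mem_periodsModInt_sub {x : ℝ → ℝ} {c : ℝ} {i j : ℤ} {m : ℤ}
    (hm : ∀ t, x (t + i * c) = x (t + j * c) + m) : i - j ∈ periodsModInt x c := by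
  refine ⟨m, fun t => ?_⟩
  have h := hm (t - j * c)
  rwa [sub_add_cancel, show t - j * c + i * c = t + ((i - j : ℤ) : ℝ) * c by push_cast; ring] at h

theorem Int.isCoprime_sub_of_lt_prime {p : ℕ} (hp : p.Prime) {i j : ℕ} (hi : i < p) (hj : j < p)
    (hij : i ≠ j) : IsCoprime ((i : ℤ) - j) p := by
  rw [Int.isCoprime_iff_nat_coprime, Int.natAbs_natCast]
  exact Nat.Coprime.symm <| (hp.coprime_iff_not_dvd).2 <| Nat.not_dvd_of_pos_of_lt (by omega)
    (by omega)

theorem AddSubgroup.one_mem_of_isCoprime {S : AddSubgroup ℤ} {a b : ℤ} (hab : IsCoprime a b)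
    (ha : a ∈ S) (hb : b ∈ S) : (1 : ℤ) ∈ S := by
  obtain ⟨u, v, huv⟩ := hab
  rw [← huv]
  exact S.add_mem (S.zsmul_mem ha u) (S.zsmul_mem hb v)

theorem shifts_of_nonfundamental_distinct_general (V : ℝ → ℝ → ℝ) (T₀ : ℝ)
    (hVt : ∀ t y, V (t + T₀) y = V t y)
    (k₁ : ℤ) (k₂ : ℕ) (p : ℕ) (hp : p.Prime)
    (x : ℝ → ℝ)
    (hsol : ∀ t, deriv (deriv x) t + deriv (V t) (x t) = 0)
    (hwind : ∀ t, x (t + p * (k₂ * T₀)) = x t + p * k₁)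
    (hnonfund : ¬ ∃ m : ℤ, ∀ t, x (t + k₂ * T₀) = x t + m) :
    (∀ i : ℕ, i < p →
      ∀ t, deriv (deriv fun s => x (s + i * (k₂ * T₀))) t
          + deriv (V t) (x (t + i * (k₂ * T₀))) = 0) ∧
    (∀ i j : ℕ, i < p → j < p → i ≠ j →
      ¬ ∃ m : ℤ, ∀ t, x (t + i * (k₂ * T₀)) = x (t + j * (k₂ * T₀)) + m) := by
  have hper : Function.Periodic V T₀ := fun t => funext (hVt t)
  refine ⟨fun i _ => solution_comp_add_period ?_ hsol, ?_⟩
  · rw [← mul_assoc]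
    exact_mod_cast hper.nat_mul (i * k₂)
  rintro i j hi hj hij ⟨m, hm⟩
  have hp_mem : (p : ℤ) ∈ periodsModInt x (k₂ * T₀) := ⟨p * k₁, by exact_mod_cast hwind⟩
  have hij_mem : (i : ℤ) - j ∈ periodsModInt x (k₂ * T₀) :=
    mem_periodsModInt_sub (m := m) (by exact_mod_cast hm)
  obtain ⟨m₁, hm₁⟩ := AddSubgroup.one_mem_of_isCoprime
    (Int.isCoprime_sub_of_lt_prime hp hi hj hij) hij_mem hp_mem
  exact hnonfund ⟨m₁, by simpa using hm₁⟩

/-- if `x` is a non-fundamental solution with winding `p k₁` in time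
`p k₂ T₀`, `p` prime, then the `p` time shifts `x(· + i k₂ T₀)`, `i = 0, …, p-1`,
are pairwise distinct (modulo integer shift) solutions. -/
theorem shifts_of_nonfundamental_distinct (V : ℝ → ℝ → ℝ) (T₀ : ℝ) (hT₀ : 0 < T₀)
    (hV : ContDiff ℝ 2 (Function.uncurry V))
    (hVx : ∀ t y, V t (y + 1) = V t y)
    (hVt : ∀ t y, V (t + T₀) y = V t y)
    (k₁ : ℤ) (k₂ : ℕ) (hk₂ : 0 < k₂) (p : ℕ) (hp : p.Prime)
    (x : ℝ → ℝ) (hx : ContDiff ℝ 2 x)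
    (hsol : ∀ t, deriv (deriv x) t + deriv (V t) (x t) = 0)
    (hwind : ∀ t, x (t + p * (k₂ * T₀)) = x t + p * k₁)
    (hnonfund : ¬ ∃ m : ℤ, ∀ t, x (t + k₂ * T₀) = x t + m) :
    (∀ i : ℕ, i < p →
      ∀ t, deriv (deriv fun s => x (s + i * (k₂ * T₀))) t
          + deriv (V t) (x (t + i * (k₂ * T₀))) = 0) ∧
    (∀ i j : ℕ, i < p → j < p → i ≠ j →
      ¬ ∃ m : ℤ, ∀ t, x (t + i * (k₂ * T₀)) = x (t + j * (k₂ * T₀)) + m) :=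
  shifts_of_nonfundamental_distinct_general V T₀ hVt k₁ k₂ p hp x hsol hwind hnonfund
end

section
/- Under the same assumptions, the action value f(x) = (1/(k₂T₀)) ∫₀^{k₂T₀} ( ½|ẋ(t)|² − V(t, x(t)) ) dt of any solution x with winding condition x(t + k₂T₀) = x(t) + k₁ is bounded in absolute value by a constant depending only on V, k₁, k₂ and T₀ (not on the particular solution). -/
/-!
Along a solution the energy `E = ẋ²/2 + V(t, x)` changes at the rate `∂ₜV(t, x)`, which is
bounded because `∂ₜV` is continuous and doubly periodic; so over one period `E` varies by
at most `sup |∂ₜV| · k₂T₀`. By the mean value theorem the winding condition gives a time `c`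
in the period with `ẋ(c) = k₁ / (k₂T₀)`, which bounds `E(c)`. Hence `E`, and with it the
Lagrangian `E - 2V`, is bounded on the whole period by a constant independent of the solution.
-/

open Set Function

theorem range_subset_image_Icc_prod_of_periodic {α : Type*} {f : ℝ × ℝ → α} {T S : ℝ}
    (hT : 0 < T) (hS : 0 < S) (h₁ : ∀ p, f (p + (T, 0)) = f p)
    (h₂ : ∀ p, f (p + (0, S)) = f p) :
    range f ⊆ f '' (Icc 0 T ×ˢ Icc 0 S) := by
  rintro _ ⟨⟨t, y⟩, rfl⟩
  obtain ⟨t', ht', hft⟩ := Periodic.exists_mem_Ico₀ (c := T) (f := fun s => f (s, y))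
    (fun s => by simpa using h₁ (s, y)) hT t
  obtain ⟨y', hy', hfy⟩ := Periodic.exists_mem_Ico₀ (c := S) (f := fun z => f (t', z))
    (fun z => by simpa using h₂ (t', z)) hS y
  exact ⟨(t', y'), ⟨Ico_subset_Icc_self ht', Ico_subset_Icc_self hy'⟩, (hft.trans hfy).symm⟩

theorem exists_norm_le_of_periodic_prod {E : Type*} [SeminormedAddCommGroup E]
    {f : ℝ × ℝ → E} (hf : Continuous f) {T S : ℝ} (hT : 0 < T) (hS : 0 < S)
    (h₁ : ∀ p, f (p + (T, 0)) = f p) (h₂ : ∀ p, f (p + (0, S)) = f p) :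
    ∃ M, ∀ p, ‖f p‖ ≤ M := by
  have hbdd := ((isCompact_Icc.prod isCompact_Icc).image hf).isBounded.subset
    (range_subset_image_Icc_prod_of_periodic hT hS h₁ h₂)
  obtain ⟨M, hM⟩ := isBounded_iff_forall_norm_le.1 hbdd
  exact ⟨M, fun p => hM _ (mem_range_self p)⟩

theorem fderiv_add_of_periodic {𝕜 E F : Type*} [NontriviallyNormedField 𝕜]
    [NormedAddCommGroup E] [NormedSpace 𝕜 E] [NormedAddCommGroup F] [NormedSpace 𝕜 F]
    {g : E → F} {v : E} (hg : ∀ q, g (q + v) = g q) (p : E) :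
    fderiv 𝕜 g (p + v) = fderiv 𝕜 g p := by
  rw [← fderiv_comp_add_right]
  simp only [hg]

noncomputable def energy (V : ℝ → ℝ → ℝ) (x : ℝ → ℝ) (t : ℝ) : ℝ :=
  deriv x t ^ 2 / 2 + V t (x t)

theorem hasDerivAt_energy {V : ℝ → ℝ → ℝ} {x : ℝ → ℝ} {t : ℝ}
    (hV : DifferentiableAt ℝ (uncurry V) (t, x t)) (hx : DifferentiableAt ℝ x t)
    (hx' : DifferentiableAt ℝ (deriv x) t)
    (hode : deriv (deriv x) t + deriv (V t) (x t) = 0) :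
    HasDerivAt (energy V x) (fderiv ℝ (uncurry V) (t, x t) (1, 0)) t := by
  set D := fderiv ℝ (uncurry V) (t, x t)
  have hVy : deriv (V t) (x t) = D (0, 1) :=
    (hV.hasFDerivAt.comp_hasDerivAt (x t)
      ((hasDerivAt_const (x t) t).prodMk (hasDerivAt_id (x t)))).deriv
  have hkin : HasDerivAt (fun s => deriv x s ^ 2 / 2) (deriv x t * deriv (deriv x) t) t :=
    ((hx'.hasDerivAt.fun_pow 2).div_const 2).congr_deriv (by push_cast; ring)
  have hpot : HasDerivAt (fun s => V s (x s)) (D (1, deriv x t)) t :=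
    hV.hasFDerivAt.comp_hasDerivAt (f := fun s => (s, x s)) t
      ((hasDerivAt_id t).prodMk hx.hasDerivAt)
  have hsplit : ((1 : ℝ), deriv x t) = (1, 0) + deriv x t • (0, 1) := by simp
  refine (hkin.add hpot).congr_deriv ?_
  rw [hsplit, map_add, map_smul, smul_eq_mul, ← hVy]
  linear_combination deriv x t * hode

theorem abs_energy_sub_le {V : ℝ → ℝ → ℝ} {x : ℝ → ℝ} {M : ℝ}
    (hV : Differentiable ℝ (uncurry V)) (hx : Differentiable ℝ x)
    (hx' : Differentiable ℝ (deriv x))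
    (hode : ∀ t, deriv (deriv x) t + deriv (V t) (x t) = 0)
    (hM : ∀ t, |fderiv ℝ (uncurry V) (t, x t) (1, 0)| ≤ M) (s u : ℝ) :
    |energy V x u - energy V x s| ≤ M * |u - s| := by
  simpa only [Real.norm_eq_abs] using convex_univ.norm_image_sub_le_of_norm_hasDerivWithin_le
    (fun t _ => (hasDerivAt_energy (hV _) (hx t) (hx' t) (hode t)).hasDerivWithinAt)
    (fun t _ => (Real.norm_eq_abs _).trans_le (hM t)) (mem_univ s) (mem_univ u)

theorem abs_energy_le {V : ℝ → ℝ → ℝ} {x : ℝ → ℝ} {M₀ M₁ : ℝ}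
    (hV : Differentiable ℝ (uncurry V)) (hx : Differentiable ℝ x)
    (hx' : Differentiable ℝ (deriv x))
    (hode : ∀ t, deriv (deriv x) t + deriv (V t) (x t) = 0)
    (hM₀ : ∀ t, |V t (x t)| ≤ M₀)
    (hM₁ : ∀ t, |fderiv ℝ (uncurry V) (t, x t) (1, 0)| ≤ M₁)
    (c t : ℝ) :
    |energy V x t| ≤ deriv x c ^ 2 / 2 + M₀ + M₁ * |t - c| := by
  have hEc : |energy V x c| ≤ deriv x c ^ 2 / 2 + M₀ :=
    calc |energy V x c| ≤ |deriv x c ^ 2 / 2| + |V c (x c)| := abs_add_le _ _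
      _ ≤ deriv x c ^ 2 / 2 + M₀ := by rw [abs_of_nonneg (by positivity)]; linarith [hM₀ c]
  linarith [abs_sub_abs_le_abs_sub (energy V x t) (energy V x c),
    abs_energy_sub_le hV hx hx' hode hM₁ c t]

theorem abs_lagrangian_le_of_abs_energy_le {V : ℝ → ℝ → ℝ} {x : ℝ → ℝ} {t e M : ℝ}
    (he : |energy V x t| ≤ e) (hV : |V t (x t)| ≤ M) :
    |deriv x t ^ 2 / 2 - V t (x t)| ≤ e + 2 * M := by
  have hlag : deriv x t ^ 2 / 2 - V t (x t) = energy V x t - 2 * V t (x t) := by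
    rw [energy]; ring
  rw [hlag]
  calc |energy V x t - 2 * V t (x t)| ≤ |energy V x t| + |2 * V t (x t)| := abs_sub _ _
    _ ≤ e + 2 * M := by rw [abs_mul, abs_two]; linarith

theorem abs_inv_mul_integral_le {f : ℝ → ℝ} {L C : ℝ} (hL : 0 < L)
    (hf : ∀ t ∈ Icc 0 L, |f t| ≤ C) :
    |L⁻¹ * ∫ t in (0 : ℝ)..L, f t| ≤ C := by
  have hint := intervalIntegral.norm_integral_le_of_norm_le_const (a := 0) (b := L) (f := f)
    fun t ht => hf t (Ioc_subset_Icc_self ((uIoc_of_le hL.le) ▸ ht))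
  rw [Real.norm_eq_abs, sub_zero, abs_of_pos hL] at hint
  rw [abs_mul, abs_inv, abs_of_pos hL, inv_mul_le_iff₀ hL, mul_comm]
  exact hint

/-- the action value of any winding solution is bounded by a constant
depending only on `V`, `k₁`, `k₂`, `T₀`. -/
theorem action_bound (V : ℝ → ℝ → ℝ) (T₀ : ℝ) (hT₀ : 0 < T₀)
    (hV : ContDiff ℝ 2 (Function.uncurry V))
    (hVx : ∀ t y, V t (y + 1) = V t y)
    (hVt : ∀ t y, V (t + T₀) y = V t y)
    (k₁ : ℤ) (k₂ : ℕ) (hk₂ : 0 < k₂) :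
    ∃ B : ℝ, ∀ x : ℝ → ℝ, ContDiff ℝ 2 x →
      (∀ t, deriv (deriv x) t + deriv (V t) (x t) = 0) →
      (∀ t, x (t + k₂ * T₀) = x t + k₁) →
      |(k₂ * T₀ : ℝ)⁻¹ * ∫ t in (0:ℝ)..(k₂ * T₀), ((deriv x t) ^ 2 / 2 - V t (x t))| ≤ B := by
  have hperT : ∀ p, uncurry V (p + (T₀, 0)) = uncurry V p := fun ⟨t, y⟩ => by simp [hVt]
  have hper1 : ∀ p, uncurry V (p + (0, 1)) = uncurry V p := fun ⟨t, y⟩ => by simp [hVx]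
  obtain ⟨M₀, hM₀⟩ := exists_norm_le_of_periodic_prod hV.continuous hT₀ one_pos hperT hper1
  obtain ⟨M₁, hM₁⟩ :=
    exists_norm_le_of_periodic_prod (f := fun p => fderiv ℝ (uncurry V) p (1, 0))
    ((hV.continuous_fderiv (by norm_num)).clm_apply continuous_const) hT₀ one_pos
    (fun p => by rw [fderiv_add_of_periodic hperT])
    (fun p => by rw [fderiv_add_of_periodic hper1])
  have hV₀ : ∀ t y, |V t y| ≤ M₀ := fun t y => hM₀ (t, y)
  have hV₁ : ∀ t y, |fderiv ℝ (uncurry V) (t, y) (1, 0)| ≤ M₁ := fun t y => hM₁ (t, y)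
  set L : ℝ := k₂ * T₀
  have hL : 0 < L := mul_pos (by exact_mod_cast hk₂) hT₀
  refine ⟨(k₁ / L) ^ 2 / 2 + M₀ + M₁ * L + 2 * M₀, fun x hx hode hwind => ?_⟩
  obtain ⟨c, hc, hxc⟩ := exists_deriv_eq_slope x hL hx.continuous.continuousOn
    (hx.differentiable (by norm_num)).differentiableOn
  rw [show x L = x 0 + k₁ by simpa using hwind 0, add_sub_cancel_left, sub_zero] at hxc
  refine abs_inv_mul_integral_le hL fun t ht =>
    abs_lagrangian_le_of_abs_energy_le ?_ (hV₀ t (x t))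
  have hE := abs_energy_le (hV.differentiable (by norm_num)) (hx.differentiable (by norm_num))
    hx.differentiable_deriv_two hode (fun s => hV₀ s (x s)) (fun s => hV₁ s (x s)) c t
  have hM₁_nonneg : 0 ≤ M₁ := (abs_nonneg _).trans (hV₁ 0 0)
  have htc : |t - c| ≤ L :=
    abs_sub_le_iff.2 ⟨by linarith [hc.1, ht.2], by linarith [hc.2, ht.1]⟩
  rw [hxc] at hE
  exact hE.trans (by gcongr)
end
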